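/- Let N ≥ 3 be an odd integer, let x = (x_0, x_1, …, x_N) ∈ [0,1]^{N+1}, and set y_{j,k} = (x_j + x_k)/2 for 0 ≤ j,k ≤ N. If (N−1)^{-1}(∑_{k=0}^N x_k − 1) ≤ y_{j,k} for every pair (j,k) with 0 ≤ j,k ≤ N and j+k odd, then y_{j,k} ≤ 1/2 for every pair (j,k) with 0 ≤ j,k ≤ N and j+k odd. -/

import Mathlib

/-!
Write `N = 2m + 1` and `S = ∑ x_i`, so that `R_N(x) = (S - 1) / (2m)`. Given `j` even and `k` odd,
the other `m` even and `m` odd indices form `m²` odd pairs; summing the hypothesis over all of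
them gives `m² R_N(x) ≤ m (S - x_j - x_k) / 2`, i.e. `x_j + x_k ≤ 1`.
-/

open Finset

theorem card_filter_even_range_two_mul (n : ℕ) : #{i ∈ range (2 * n) | Even i} = n := by
  induction n with
  | zero => simp
  | succ n ih =>
    rw [show 2 * (n + 1) = 2 * n + 1 + 1 by ring, range_add_one, range_add_one, filter_insert,
      filter_insert, if_neg (by simp [parity_simps]), if_pos (by simp),
      card_insert_of_notMem (by simp), ih]

theorem card_filter_not_even_range_two_mul (n : ℕ) : #{i ∈ range (2 * n) | ¬Even i} = n := by
  have := card_filter_add_card_filter_not (s := range (2 * n)) (Even ·)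
  rw [card_filter_even_range_two_mul, card_range] at this
  omega

theorem card_mul_card_mul_le_card_mul_sum_add_card_mul_sum {ι R : Type*} [CommSemiring R]
    [PartialOrder R] [IsOrderedRing R] {s t : Finset ι} {f : ι → R} {c : R}
    (h : ∀ a ∈ s, ∀ b ∈ t, c ≤ f a + f b) :
    #s * #t * c ≤ #t * ∑ a ∈ s, f a + #s * ∑ b ∈ t, f b := by
  calc (#s * #t * c : R) = ∑ a ∈ s, ∑ b ∈ t, c := by simp [mul_assoc]
    _ ≤ ∑ a ∈ s, ∑ b ∈ t, (f a + f b) :=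
      sum_le_sum fun a ha => sum_le_sum fun b hb => h a ha b hb
    _ = #t * ∑ a ∈ s, f a + #s * ∑ b ∈ t, f b := by
      simp only [sum_add_distrib, sum_const, nsmul_eq_mul, mul_sum]

theorem add_le_one_of_sum_sub_one_le_mul_add {m : ℕ} (hm : 0 < m) {x : ℕ → ℝ}
    (h : ∀ a b, a < 2 * (m + 1) → b < 2 * (m + 1) → Even a → ¬Even b →
      ∑ i ∈ range (2 * (m + 1)), x i - 1 ≤ m * (x a + x b))
    {j k : ℕ} (hj : j < 2 * (m + 1)) (hk : k < 2 * (m + 1)) (hje : Even j) (hko : ¬Even k) :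
    x j + x k ≤ 1 := by
  set S := ∑ i ∈ range (2 * (m + 1)), x i
  set evens := {i ∈ range (2 * (m + 1)) | Even i}
  set odds := {i ∈ range (2 * (m + 1)) | ¬Even i}
  have hjE : j ∈ evens := mem_filter.2 ⟨mem_range.2 hj, hje⟩
  have hkO : k ∈ odds := mem_filter.2 ⟨mem_range.2 hk, hko⟩
  have hcardE : #(evens.erase j) = m := by
    rw [card_erase_of_mem hjE, card_filter_even_range_two_mul]; rfl
  have hcardO : #(odds.erase k) = m := by
    rw [card_erase_of_mem hkO, card_filter_not_even_range_two_mul]; rfl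
  have hS : ∑ i ∈ evens, x i + ∑ i ∈ odds, x i = S := sum_filter_add_sum_filter_not _ _ _
  have hmR : (0 : ℝ) < m := by exact_mod_cast hm
  have hpair : ∀ a ∈ evens.erase j, ∀ b ∈ odds.erase k, (S - 1) / m ≤ x a + x b := by
    intro a ha b hb
    obtain ⟨ha, hae⟩ := mem_filter.1 (mem_of_mem_erase ha)
    obtain ⟨hb, hbo⟩ := mem_filter.1 (mem_of_mem_erase hb)
    rw [div_le_iff₀' hmR]
    exact h a b (mem_range.1 ha) (mem_range.1 hb) hae hbo
  have hdouble := card_mul_card_mul_le_card_mul_sum_add_card_mul_sum hpair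
  rw [hcardE, hcardO, sum_erase_eq_sub hjE, sum_erase_eq_sub hkO, mul_assoc,
    mul_div_cancel₀ _ hmR.ne', ← mul_add] at hdouble
  linarith [le_of_mul_le_mul_left hdouble hmR]

theorem stmt_0_general (N : ℕ) (hN : 3 ≤ N) (hNodd : Odd N)
    (x : ℕ → ℝ)
    (h : ∀ j k, j ≤ N → k ≤ N → Odd (j + k) →
      ((N : ℝ) - 1)⁻¹ * (∑ i ∈ Finset.range (N + 1), x i - 1) ≤ (x j + x k) / 2) :
    ∀ j k, j ≤ N → k ≤ N → Odd (j + k) → (x j + x k) / 2 ≤ 1 / 2 := by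
  intro j k hj hk hjk
  obtain ⟨m, rfl⟩ := hNodd
  have hm : 0 < m := by omega
  have hscaled : ∀ a b, a < 2 * (m + 1) → b < 2 * (m + 1) → Even a → ¬Even b →
      ∑ i ∈ range (2 * (m + 1)), x i - 1 ≤ m * (x a + x b) := by
    intro a b ha hb hae hbo
    have hab := h a b (by omega) (by omega) (hae.add_odd (Nat.not_even_iff_odd.1 hbo))
    rw [show ((2 * m + 1 : ℕ) : ℝ) - 1 = 2 * m by push_cast; ring,
      show 2 * m + 1 + 1 = 2 * (m + 1) by ring, inv_mul_le_iff₀ (by positivity)] at hab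
    linarith
  suffices x j + x k ≤ 1 by linarith
  rcases Nat.even_or_odd j with hje | hjo
  · exact add_le_one_of_sum_sub_one_le_mul_add hm hscaled (by omega) (by omega) hje
      (Nat.not_even_iff_odd.2 ((Nat.odd_add'.1 hjk).2 hje))
  · rw [add_comm]
    exact add_le_one_of_sum_sub_one_le_mul_add hm hscaled (by omega) (by omega)
      ((Nat.odd_add.1 hjk).1 hjo) (Nat.not_even_iff_odd.2 hjo)

/-- part of Lemma 2.4 in the paper, (1) ⇒ (2).
Let `N ≥ 3` be odd, `x = (x_0,…,x_N) ∈ [0,1]^{N+1}` and `y_{j,k} = (x_j+x_k)/2`.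
If `(N-1)⁻¹ (∑ x_k - 1) ≤ y_{j,k}` for all pairs with `j+k` odd, then
`y_{j,k} ≤ 1/2` for all such pairs. -/
theorem stmt_0 (N : ℕ) (hN : 3 ≤ N) (hNodd : Odd N)
    (x : ℕ → ℝ) (hx : ∀ j, j ≤ N → x j ∈ Set.Icc (0 : ℝ) 1)
    (h : ∀ j k, j ≤ N → k ≤ N → Odd (j + k) →
      ((N : ℝ) - 1)⁻¹ * (∑ i ∈ Finset.range (N + 1), x i - 1) ≤ (x j + x k) / 2) :
    ∀ j k, j ≤ N → k ≤ N → Odd (j + k) → (x j + x k) / 2 ≤ 1 / 2 :=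
  stmt_0_general N hN hNodd x h
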